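/- For every p ∈ ℕ₀ and every n ∈ ℕ, one has H_n(−p, 2, 2) = H_n(−p)·H_n(2,2) − B_p·H_n(1,2) − C^{(p)}_1(n)·H_n(2) + ((D^{(p)}(x) − B_p)/x)|_{x=B}·H_n + C^{(p)}_{1,2}(n), where one uses that the constant term of the polynomial D^{(p)}(x) equals B_p, so (D^{(p)}(x) − B_p)/x is a polynomial, and |_{x=B} denotes its umbral evaluation at B. -/

import Mathlib

/-- Extended multiple harmonic sum `H_n(k_1,…,k_r) = ∑_{n ≥ n_1 > ⋯ > n_r ≥ 1} 1/(n_1^{k_1} ⋯ n_r^{k_r})`,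
with `H_n(∅) = 1`; the exponents may be arbitrary integers.  In particular `Hs n [-(p:ℤ)] = ∑_{m=1}^n m^p`
and `Hs n [1]` is the `n`-th harmonic number. -/
def Hs : ℕ → List ℤ → ℚ
  | _, [] => 1
  | n, k :: ks => ∑ m ∈ Finset.Icc 1 n, ((m : ℚ) ^ k)⁻¹ * Hs (m - 1) ks

/-- The polynomial `C^{(p)}_{a_2,…,a_r}(x)`, where the list `a = [a_1, a_2, …, a_r]` is the *full*
subscript list including the leading `a_1 = 0` (so `Cpoly p [0]` is `C^{(p)}`, `Cpoly p [0,0]`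
is `C^{(p)}_0`, `Cpoly p [0,1,2]` is `C^{(p)}_{1,2}`, …):
`C^{(p)}_{a_2,…,a_r}(x) = ∑_{j_1,…,j_r ≥ 0, j_1+⋯+j_r ≤ p-a_r}
  (∏_{i=1}^r binom(p+1-a_i-j_1-⋯-j_{i-1}, j_i) B_{j_i} / (p+1-a_i-j_1-⋯-j_{i-1}))
    x^{p+1-a_r-j_1-⋯-j_r}`,
the zero polynomial if `p < a_r`, with `B_j = bernoulli' j`. -/
noncomputable def Cpoly (p : ℕ) (a : List ℕ) : Polynomial ℚ :=
  ∑ j ∈ Fintype.piFinset (fun _ : Fin a.length => Finset.range (p + 1)),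
    if (∑ i, j i) + a.getLastD 0 ≤ p then
      Polynomial.C (∏ i : Fin a.length,
        ((p + 1 - a.get i - ∑ i' ∈ Finset.Iio i, j i').choose (j i) : ℚ) * bernoulli' (j i) /
          ((p + 1 - a.get i - ∑ i' ∈ Finset.Iio i, j i' : ℕ) : ℚ)) *
        Polynomial.X ^ (p + 1 - a.getLastD 0 - ∑ i, j i)
    else 0

/-- Umbral evaluation `Q(B)` of a polynomial `Q(x) = ∑_m q_m x^m`: replace `x^m` by the
Bernoulli number `B_m = bernoulli' m` (the convention with `B_1 = +1/2`). -/
noncomputable def umbralB (Q : Polynomial ℚ) : ℚ := Q.sum fun m c => c * bernoulli' m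


open Finset Polynomial



noncomputable def cc (q j : ℕ) : ℚ := ((q+1).choose j : ℚ) * bernoulli' j / ((q+1 : ℕ) : ℚ)

lemma sum_piFinset_one {M : Type*} [AddCommMonoid M] (s : Finset ℕ) (f : (Fin 1 → ℕ) → M) :
    ∑ j ∈ Fintype.piFinset (fun _ : Fin 1 => s), f j = ∑ x ∈ s, f (fun _ => x) := by
  apply Finset.sum_nbij' (fun j => j 0) (fun x _ => x)
  · intro a ha; simpa [Fintype.mem_piFinset] using (Fintype.mem_piFinset.1 ha) 0
  · intro a ha; simp [Fintype.mem_piFinset, ha]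
  · intro a _; funext i; fin_cases i; rfl
  · intro a _; rfl
  · intro a _; congr 1; funext i; fin_cases i; rfl

lemma sum_piFinset_two {M : Type*} [AddCommMonoid M] (s : Finset ℕ) (f : (Fin 2 → ℕ) → M) :
    ∑ j ∈ Fintype.piFinset (fun _ : Fin 2 => s), f j = ∑ x ∈ s, ∑ y ∈ s, f ![x, y] := by
  rw [← Finset.sum_product']
  apply Finset.sum_nbij' (fun j => (j 0, j 1)) (fun x => ![x.1, x.2])
  · intro a ha
    have := Fintype.mem_piFinset.1 ha
    simp [Finset.mem_product, this 0, this 1]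
  · intro a ha
    simp only [Finset.mem_product] at ha
    apply Fintype.mem_piFinset.2; intro i; fin_cases i <;> simp [ha.1, ha.2]
  · intro a _; funext i; fin_cases i <;> rfl
  · intro a _; rfl
  · intro a _; congr 1; funext i; fin_cases i <;> rfl

lemma Cpoly0 (p : ℕ) : Cpoly p [0] = ∑ j ∈ range (p+1), C (cc p j) * X^(p+1-j) := by
  rw [Cpoly]
  refine Eq.trans (sum_piFinset_one (Finset.range (p+1)) _) ?_
  apply sum_congr rfl
  intro x hx
  rw [mem_range] at hx
  rw [if_pos]
  · simp [cc]
  · simpa using Nat.lt_succ_iff.mp hx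

lemma Cpoly01 (p : ℕ) :
    Cpoly p [0,1] = ∑ x ∈ range p, C (cc p x) * Cpoly (p-1-x) [0] := by
  rw [Cpoly]
  refine Eq.trans (sum_piFinset_two (Finset.range (p+1)) _) ?_
  simp only [List.length_cons, List.length_nil, Nat.zero_add, Nat.reduceAdd]
  have h0 : Finset.Iio (0 : Fin 2) = ∅ := by decide
  have h1 : Finset.Iio (1 : Fin 2) = {0} := by decide
  have hL : ([0,1] : List ℕ).getLastD 0 = 1 := rfl
  have g0 : ([0,1] : List ℕ).get (0 : Fin 2) = 0 := rfl
  have g1 : ([0,1] : List ℕ).get (1 : Fin 2) = 1 := rfl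
  simp only [Fin.sum_univ_two, Fin.prod_univ_two, Matrix.cons_val_zero, Matrix.cons_val_one,
    Matrix.head_cons, h0, h1, g0, g1, Finset.sum_empty, Finset.sum_singleton, hL, Nat.sub_zero,
    Nat.add_sub_cancel]
  rw [(Finset.sum_subset (Finset.range_subset_range.2 p.le_succ) ?_).symm]
  · apply sum_congr rfl
    intro x hx
    rw [mem_range] at hx
    rw [Cpoly0, Finset.mul_sum]
    rw [(Finset.sum_subset (Finset.range_subset_range.2 (by omega : p - 1 - x + 1 ≤ p + 1)) ?_).symm]
    · apply sum_congr rfl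
      intro y hy
      rw [mem_range] at hy
      rw [if_pos (by omega)]
      have e1 : p - 1 - x + 1 = p - x := by omega
      have e2 : p - (x + y) = p - 1 - x + 1 - y := by omega
      simp only [cc, map_mul, e2, e1]
      ring
    · intro y hy hny
      rw [mem_range] at hy
      simp only [mem_range, not_lt] at hny
      rw [if_neg (by omega)]
  · intro x hx hnx
    rw [mem_range] at hx
    simp only [mem_range, not_lt] at hnx
    apply Finset.sum_eq_zero
    intro y _
    rw [if_neg (by omega)]

lemma sum_piFinset_three {M : Type*} [AddCommMonoid M] (s : Finset ℕ) (f : (Fin 3 → ℕ) → M) :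
    ∑ j ∈ Fintype.piFinset (fun _ : Fin 3 => s), f j
      = ∑ x ∈ s, ∑ y ∈ s, ∑ z ∈ s, f ![x, y, z] := by
  rw [← Finset.sum_product', ← Finset.sum_product']
  apply Finset.sum_nbij' (fun j => ((j 0, j 1), j 2)) (fun x => ![x.1.1, x.1.2, x.2])
  · intro a ha
    have := Fintype.mem_piFinset.1 ha
    simp [Finset.mem_product, this 0, this 1, this 2]
  · intro a ha
    simp only [Finset.mem_product] at ha
    apply Fintype.mem_piFinset.2; intro i; fin_cases i <;> simp [ha.1.1, ha.1.2, ha.2]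
  · intro a _; funext i; fin_cases i <;> rfl
  · intro a _; rfl
  · intro a _; congr 1; funext i; fin_cases i <;> rfl


lemma Cpoly012 (p : ℕ) :
    Cpoly p [0,1,2] = ∑ x ∈ range p, ∑ y ∈ range (p-1-x),
      C (cc p x * cc (p-1-x) y) * Cpoly (p-2-x-y) [0] := by
  rw [Cpoly]
  refine Eq.trans (sum_piFinset_three (Finset.range (p+1)) _) ?_
  simp only [List.length_cons, List.length_nil, Nat.zero_add, Nat.reduceAdd]
  have h0 : Finset.Iio (0 : Fin 3) = ∅ := by decide
  have h1 : Finset.Iio (1 : Fin 3) = {0} := by decide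
  have h2 : Finset.Iio (2 : Fin 3) = {0, 1} := by decide
  have hL : ([0,1,2] : List ℕ).getLastD 0 = 2 := rfl
  have g0 : ([0,1,2] : List ℕ).get (0 : Fin 3) = 0 := rfl
  have g1 : ([0,1,2] : List ℕ).get (1 : Fin 3) = 1 := rfl
  have g2 : ([0,1,2] : List ℕ).get (2 : Fin 3) = 2 := rfl
  simp only [Fin.sum_univ_three, Fin.prod_univ_three, Matrix.cons_val_zero, Matrix.cons_val_one,
    Matrix.head_cons, Matrix.cons_val_two, Matrix.tail_cons, h0, h1, h2, g0, g1, g2,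
    Finset.sum_empty, Finset.sum_singleton, Finset.sum_insert (by decide : (0:ℕ) ∉ ({1}:Finset ℕ)),
    hL, Nat.sub_zero]
  have hs2 : ∀ x y z : ℕ, (∑ i ∈ ({0,1} : Finset (Fin 3)), ![x,y,z] i) = x + y := by
    intro x y z
    rw [Finset.sum_insert (by decide), Finset.sum_singleton]
    rfl
  simp only [hs2]
  rw [(Finset.sum_subset (Finset.range_subset_range.2 p.le_succ) ?_).symm]
  · apply sum_congr rfl
    intro x hx
    rw [mem_range] at hx
    rw [(Finset.sum_subset (Finset.range_subset_range.2 (by omega : p - 1 - x ≤ p + 1)) ?_).symm]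
    · apply sum_congr rfl
      intro y hy
      rw [mem_range] at hy
      rw [Cpoly0, Finset.mul_sum]
      rw [(Finset.sum_subset (Finset.range_subset_range.2 (by omega : p - 2 - x - y + 1 ≤ p + 1)) ?_).symm]
      · apply sum_congr rfl
        intro z hz
        rw [mem_range] at hz
        rw [if_pos (by omega)]
        have e1 : p + 1 - 1 - x = p - 1 - x + 1 := by omega
        have e2 : p + 1 - 2 - (x + y) = p - 2 - x - y + 1 := by omega
        have e3 : p + 1 - 2 - (x + y + z) = p - 2 - x - y + 1 - z := by omega
        simp only [cc, map_mul, e1, e2, e3]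
        ring
      · intro z hz hnz
        rw [mem_range] at hz
        simp only [mem_range, not_lt] at hnz
        rw [if_neg (by omega)]
    · intro y hy hny
      rw [mem_range] at hy
      simp only [mem_range, not_lt] at hny
      apply Finset.sum_eq_zero
      intro z _
      rw [if_neg (by omega)]
  · intro x hx hnx
    rw [mem_range] at hx
    simp only [mem_range, not_lt] at hnx
    apply Finset.sum_eq_zero
    intro y _
    apply Finset.sum_eq_zero
    intro z _
    rw [if_neg (by omega)]

noncomputable def Dpoly (p : ℕ) : Polynomial ℚ := ∑ j ∈ range (p+1), C (cc p j) * X^(p-j)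
noncomputable def Epoly (p : ℕ) : Polynomial ℚ := ∑ j ∈ range p, C (cc p j) * X^(p-1-j)
noncomputable def Fpoly (p : ℕ) : Polynomial ℚ :=
  ∑ x ∈ range p, ∑ y ∈ range (p-1-x), C (cc p x * cc (p-1-x) y) * X^(p-2-x-y)

lemma divX_X_mul (q : Polynomial ℚ) : (X * q).divX = q := by
  ext n
  rw [coeff_divX, coeff_X_mul]

lemma cc_self (q : ℕ) : cc q q = bernoulli' q := by
  rw [cc, Nat.choose_succ_self_right]
  have : ((q+1 : ℕ) : ℚ) ≠ 0 := by positivity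
  field_simp

lemma umbralB_monomial (a : ℚ) (k : ℕ) : umbralB (C a * X^k) = a * bernoulli' k := by
  rw [C_mul_X_pow_eq_monomial, umbralB, Polynomial.sum_monomial_index]
  simp

lemma umbralB_finset_sum {ι : Type*} (s : Finset ι) (f : ι → Polynomial ℚ) :
    umbralB (∑ i ∈ s, f i) = ∑ i ∈ s, umbralB (f i) := by
  classical
  induction s using Finset.induction_on with
  | empty => simp [umbralB]
  | insert _ _ h ih =>
    rw [Finset.sum_insert h, Finset.sum_insert h, ← ih, umbralB,
      Polynomial.sum_add_index _ _ _ (by simp) (by intros; ring)]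
    rfl

lemma umbralB_Epoly (p : ℕ) : umbralB (Epoly p) = ∑ j ∈ range p, cc p j * bernoulli' (p-1-j) := by
  rw [Epoly, umbralB_finset_sum]
  exact sum_congr rfl fun j _ => umbralB_monomial _ _

lemma C0_eq (p : ℕ) : Cpoly p [0] = X * Dpoly p := by
  rw [Cpoly0, Dpoly, Finset.mul_sum]
  apply sum_congr rfl
  intro j hj
  rw [mem_range] at hj
  have : p + 1 - j = (p - j) + 1 := by omega
  rw [this, pow_succ]
  ring

lemma D_eq (p : ℕ) : Dpoly p = X * Epoly p + C (bernoulli' p) := by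
  rw [Dpoly, Finset.sum_range_succ, cc_self, Nat.sub_self, pow_zero, mul_one, Epoly,
    Finset.mul_sum]
  congr 1
  apply sum_congr rfl
  intro j hj
  rw [mem_range] at hj
  have : p - j = (p - 1 - j) + 1 := by omega
  rw [this, pow_succ]
  ring

lemma divX_C0 (p : ℕ) : (Cpoly p [0]).divX = Dpoly p := by
  rw [C0_eq, divX_X_mul]

lemma E_eq_divX (p : ℕ) : ((Cpoly p [0]).divX - C (bernoulli' p)).divX = Epoly p := by
  rw [divX_C0, D_eq, add_sub_cancel_right, divX_X_mul]

lemma C01_eq (p : ℕ) : Cpoly p [0,1] = X * (X * Fpoly p + C (umbralB (Epoly p))) := by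
  rw [Cpoly01, umbralB_Epoly, Fpoly]
  have key : ∀ x ∈ range p, C (cc p x) * Cpoly (p-1-x) [0]
      = X * (X * (∑ y ∈ range (p-1-x), C (cc p x * cc (p-1-x) y) * X^(p-2-x-y)))
          + X * C (cc p x * bernoulli' (p-1-x)) := by
    intro x hx
    rw [mem_range] at hx
    rw [Cpoly0]
    have h1 : (p-1-x) + 1 - (p-1-x) = 1 := by omega
    rw [Finset.sum_range_succ, cc_self, h1, pow_one]
    rw [mul_add, Finset.mul_sum, Finset.mul_sum, Finset.mul_sum]
    congr 1
    · apply sum_congr rfl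
      intro y hy
      rw [mem_range] at hy
      have : (p-1-x)+1-y = (p-2-x-y)+2 := by omega
      rw [this, map_mul]
      ring
    · rw [map_mul]
      ring
  rw [Finset.sum_congr rfl key]
  rw [Finset.sum_add_distrib]
  rw [map_sum, mul_add]
  congr 1
  · rw [Finset.mul_sum, Finset.mul_sum]
  · rw [Finset.mul_sum]

lemma eval_C0 (p n : ℕ) : (Cpoly p [0]).eval (n:ℚ) = ∑ m ∈ Icc 1 n, (m:ℚ)^p := by
  rw [show (Icc 1 n) = Ico 1 (n+1) from (Finset.Ico_add_one_right_eq_Icc 1 n).symm, sum_Ico_pow,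
    Cpoly0, eval_finset_sum]
  apply sum_congr rfl
  intro j _
  rw [eval_mul, eval_C, eval_pow, eval_X, cc]
  push_cast
  ring

lemma eval_Epoly (p : ℕ) (m : ℚ) :
    (Epoly p).eval m = ∑ j ∈ range p, cc p j * m^(p-1-j) := by
  rw [Epoly, eval_finset_sum]
  simp

lemma eval_Fpoly (p : ℕ) (m : ℚ) :
    (Fpoly p).eval m = ∑ x ∈ range p, ∑ y ∈ range (p-1-x), cc p x * cc (p-1-x) y * m^(p-2-x-y) := by
  rw [Fpoly, eval_finset_sum]
  apply sum_congr rfl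
  intro x _
  rw [eval_finset_sum]
  simp

lemma eval_C01 (p n : ℕ) :
    (Cpoly p [0,1]).eval (n:ℚ) = ∑ m ∈ Icc 1 n, (Epoly p).eval (m:ℚ) := by
  rw [Cpoly01, eval_finset_sum]
  have key : ∀ x ∈ range p, (C (cc p x) * Cpoly (p-1-x) [0]).eval (n:ℚ)
      = ∑ m ∈ Icc 1 n, cc p x * (m:ℚ)^(p-1-x) := by
    intro x _
    rw [eval_mul, eval_C, eval_C0, Finset.mul_sum]
  rw [Finset.sum_congr rfl key, Finset.sum_comm]
  apply sum_congr rfl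
  intro m _
  rw [eval_Epoly]

lemma eval_C012 (p n : ℕ) :
    (Cpoly p [0,1,2]).eval (n:ℚ) = ∑ m ∈ Icc 1 n, (Fpoly p).eval (m:ℚ) := by
  rw [Cpoly012, eval_finset_sum]
  have key : ∀ x ∈ range p,
      (∑ y ∈ range (p-1-x), C (cc p x * cc (p-1-x) y) * Cpoly (p-2-x-y) [0]).eval (n:ℚ)
      = ∑ m ∈ Icc 1 n, ∑ y ∈ range (p-1-x), cc p x * cc (p-1-x) y * (m:ℚ)^(p-2-x-y) := by
    intro x _
    rw [eval_finset_sum, Finset.sum_comm]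
    apply sum_congr rfl
    intro y _
    rw [eval_mul, eval_C, eval_C0, Finset.mul_sum]
  rw [Finset.sum_congr rfl key, Finset.sum_comm]
  apply sum_congr rfl
  intro m _
  rw [eval_Fpoly]


lemma Hs_nil (n : ℕ) : Hs n [] = 1 := rfl

lemma Hs_cons (n : ℕ) (k : ℤ) (ks : List ℤ) :
    Hs n (k::ks) = ∑ m ∈ Icc 1 n, ((m:ℚ)^k)⁻¹ * Hs (m-1) ks := rfl

lemma Hs_zero (k : ℤ) (ks : List ℤ) : Hs 0 (k::ks) = 0 := by
  rw [Hs_cons]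
  simp

lemma Hs_succ (n : ℕ) (k : ℤ) (ks : List ℤ) :
    Hs (n+1) (k::ks) = Hs n (k::ks) + (((n+1:ℕ):ℚ)^k)⁻¹ * Hs n ks := by
  rw [Hs_cons, Hs_cons, Finset.sum_Icc_succ_top (by omega), Nat.add_sub_cancel]

lemma Hs_pow (p n : ℕ) : Hs n [-(p:ℤ)] = ∑ m ∈ Icc 1 n, (m:ℚ)^p := by
  rw [Hs_cons]
  apply sum_congr rfl
  intro m _
  rw [Hs_nil, mul_one, zpow_neg, inv_inv, zpow_natCast]

/-- `H_n(−p,2,2) = H_n(−p)·H_n(2,2) − B_p·H_n(1,2) − C^{(p)}_1(n)·H_n(2)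
+ ((D^{(p)}(x) − B_p)/x)|_{x=B}·H_n + C^{(p)}_{1,2}(n)`, where `D^{(p)}(x) = C^{(p)}(x)/x`
(i.e. `(Cpoly p [0]).divX`), whose constant term equals `B_p`, so that `(D^{(p)}(x) − B_p)/x`
is the polynomial `((Cpoly p [0]).divX - C (bernoulli' p)).divX`, evaluated umbrally at the
Bernoulli numbers. -/
theorem stmt_15 (p : ℕ) (n : ℕ) (hn : 0 < n) :
    Hs n [-(p : ℤ), 2, 2] =
      Hs n [-(p : ℤ)] * Hs n [2, 2] - bernoulli' p * Hs n [1, 2]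
        - (Cpoly p [0, 1]).eval (n : ℚ) * Hs n [2]
        + umbralB ((Cpoly p [0]).divX - Polynomial.C (bernoulli' p)).divX * Hs n [1]
        + (Cpoly p [0, 1, 2]).eval (n : ℚ) := by
  clear hn
  rw [E_eq_divX]
  induction n with
  | zero =>
    have a := eval_C01 p 0
    have b := eval_C012 p 0
    simp only [Nat.cast_zero, Icc_self, Finset.Icc_eq_empty_of_lt (by norm_num : (1:ℕ) > 0)] at a b
    simp [Hs_zero, a, b]
  | succ n ih =>
    have hM0 : ((n+1:ℕ):ℚ) ≠ 0 := Nat.cast_ne_zero.2 (by omega)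
    have hzp : ((((n+1:ℕ):ℚ))^(-(p:ℤ)))⁻¹ = ((n+1:ℕ):ℚ)^p := by
      rw [zpow_neg, inv_inv, zpow_natCast]
    have hz2 : ((((n+1:ℕ):ℚ))^(2:ℤ))⁻¹ = (((n+1:ℕ):ℚ)^(2:ℕ))⁻¹ := by
      rw [show (2:ℤ) = ((2:ℕ):ℤ) from rfl, zpow_natCast]
    have hz1 : ((((n+1:ℕ):ℚ))^(1:ℤ))⁻¹ = (((n+1:ℕ):ℚ))⁻¹ := by
      rw [zpow_one]
    have h222 := Hs_succ n (-(p:ℤ)) [2,2]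
    have hp' := Hs_succ n (-(p:ℤ)) []
    have h22 := Hs_succ n 2 [2]
    have h12 := Hs_succ n 1 [2]
    have h2 := Hs_succ n 2 []
    have h1 := Hs_succ n 1 []
    rw [hzp] at h222 hp'
    rw [hz2] at h22 h2
    rw [hz1] at h12 h1
    rw [Hs_nil, mul_one] at hp' h2 h1
    have hc01 : (Cpoly p [0,1]).eval ((n+1:ℕ):ℚ)
        = (Cpoly p [0,1]).eval (n:ℚ) + (Epoly p).eval ((n+1:ℕ):ℚ) := by
      rw [eval_C01, eval_C01, Finset.sum_Icc_succ_top (by omega)]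
    have hc012 : (Cpoly p [0,1,2]).eval ((n+1:ℕ):ℚ)
        = (Cpoly p [0,1,2]).eval (n:ℚ) + (Fpoly p).eval ((n+1:ℕ):ℚ) := by
      rw [eval_C012, eval_C012, Finset.sum_Icc_succ_top (by omega)]
    have hA : Hs n [-(p:ℤ)]
        = ((n+1:ℕ):ℚ) * (((n+1:ℕ):ℚ) * (Epoly p).eval ((n+1:ℕ):ℚ) + bernoulli' p)
          - ((n+1:ℕ):ℚ)^p := by
      have e1 : (Cpoly p [0]).eval ((n+1:ℕ):ℚ) = Hs n [-(p:ℤ)] + ((n+1:ℕ):ℚ)^p := by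
        rw [eval_C0, Hs_pow, Finset.sum_Icc_succ_top (by omega)]
      have e2 : (Cpoly p [0]).eval ((n+1:ℕ):ℚ)
          = ((n+1:ℕ):ℚ) * (((n+1:ℕ):ℚ) * (Epoly p).eval ((n+1:ℕ):ℚ) + bernoulli' p) := by
        rw [C0_eq, D_eq]
        simp [eval_mul, eval_add, eval_C]
      linarith [e1, e2]
    have hB : (Cpoly p [0,1]).eval (n:ℚ)
        = ((n+1:ℕ):ℚ) * (((n+1:ℕ):ℚ) * (Fpoly p).eval ((n+1:ℕ):ℚ) + umbralB (Epoly p))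
          - (Epoly p).eval ((n+1:ℕ):ℚ) := by
      have e2 : (Cpoly p [0,1]).eval ((n+1:ℕ):ℚ)
          = ((n+1:ℕ):ℚ) * (((n+1:ℕ):ℚ) * (Fpoly p).eval ((n+1:ℕ):ℚ) + umbralB (Epoly p)) := by
        rw [C01_eq]
        simp [eval_mul, eval_add, eval_C]
      linarith [hc01, e2]
    rw [h222, hp', h22, h12, h2, h1, hc01, hc012, ih, hA, hB]
    field_simp
    ring
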